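/- arXiv:2402.08346 — 3 statements merged into one kernel-verified Lean document; each statement's English description precedes it below -/
import Mathlib

section
/- If S is a locating-dominating set of a graph G and v is a vertex adjacent to a pendant vertex u (a vertex of degree 1 whose unique neighbor is v) with v ∉ S and u ∈ S, then (S ∪ {v}) \ {u} is also a locating-dominating set of G of the same cardinality. -/
/-- A set `S` of vertices is a locating-dominating set of `G`. -/
def IsLocatingDominating {V : Type*} [Fintype V] [DecidableEq V]
    (G : SimpleGraph V) [DecidableRel G.Adj] (S : Finset V) : Prop :=
  (∀ v ∉ S, (G.neighborFinset v ∩ S).Nonempty) ∧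
  ∀ u ∉ S, ∀ v ∉ S, u ≠ v → G.neighborFinset u ∩ S ≠ G.neighborFinset v ∩ S

/-!
Write `S' = (S ∪ {v}) \ {u}`. A vertex `w ≠ v` is not adjacent to `u`, so its trace
`N(w) ∩ S'` is `N(w) ∩ S`, possibly with `v` added; removing `v` gives back `N(w) ∩ S`.
Hence vertices outside `S'` other than `u` are still dominated, and any two of them with
equal traces on `S'` would have had equal traces on `S`. The pendant vertex `u` itself has
trace `{v}`, which no other vertex `w ∉ S'` can share: removing `v` would leave the
nonempty set `N(w) ∩ S` empty.
-/

open Finset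

theorem Finset.erase_inter_erase_insert {α : Type*} [DecidableEq α] {s t : Finset α} {u v : α}
    (hv : v ∉ s) (hu : u ∉ t) : (t ∩ (insert v s).erase u).erase v = t ∩ s := by
  rw [← inter_erase, erase_right_comm, erase_insert hv, inter_erase,
    erase_eq_of_notMem fun h => hu (mem_inter.1 h).1]

theorem Finset.notMem_and_ne_of_notMem_erase_insert {α : Type*} [DecidableEq α] {s : Finset α}
    {u v w : α} (hw : w ∉ (insert v s).erase u) (hwu : w ≠ u) : w ∉ s ∧ w ≠ v := by
  simp only [mem_erase, mem_insert, not_and, not_or] at hw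
  exact (hw hwu).symm

namespace SimpleGraph

variable {V : Type*} [Fintype V] {G : SimpleGraph V} [DecidableRel G.Adj] {u v : V}

theorem adj_of_neighborFinset_eq_singleton (hnbr : G.neighborFinset u = {v}) : G.Adj u v := by
  simp [← mem_neighborFinset, hnbr]

theorem notMem_neighborFinset_of_neighborFinset_eq_singleton
    (hnbr : G.neighborFinset u = {v}) {w : V} (hw : w ≠ v) : u ∉ G.neighborFinset w := by
  rw [mem_neighborFinset, adj_comm, ← mem_neighborFinset, hnbr, mem_singleton]
  exact hw

variable [DecidableEq V] {S : Finset V}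

theorem erase_neighborFinset_inter_swap (hnbr : G.neighborFinset u = {v}) (hvS : v ∉ S)
    {w : V} (hw : w ≠ v) :
    (G.neighborFinset w ∩ (insert v S).erase u).erase v = G.neighborFinset w ∩ S :=
  erase_inter_erase_insert hvS (notMem_neighborFinset_of_neighborFinset_eq_singleton hnbr hw)

theorem neighborFinset_inter_swap_of_pendant (hnbr : G.neighborFinset u = {v}) :
    G.neighborFinset u ∩ (insert v S).erase u = {v} := by
  have huv := adj_of_neighborFinset_eq_singleton hnbr
  rw [hnbr, singleton_inter_of_mem (mem_erase.2 ⟨huv.ne', mem_insert_self v S⟩)]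

end SimpleGraph

namespace IsLocatingDominating

open SimpleGraph

variable {V : Type*} [Fintype V] [DecidableEq V] {G : SimpleGraph V} [DecidableRel G.Adj]
  {S : Finset V} {u v : V}

theorem swap_dominating (hnbr : G.neighborFinset u = {v}) (hvS : v ∉ S)
    (hS : IsLocatingDominating G S) :
    ∀ w ∉ (insert v S).erase u, (G.neighborFinset w ∩ (insert v S).erase u).Nonempty := by
  intro w hw
  by_cases hwu : w = u
  · rw [hwu, neighborFinset_inter_swap_of_pendant hnbr]
    exact singleton_nonempty v
  obtain ⟨hwS, hwv⟩ := notMem_and_ne_of_notMem_erase_insert hw hwu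
  have hdom := hS.1 w hwS
  rw [← erase_neighborFinset_inter_swap hnbr hvS hwv] at hdom
  exact hdom.mono (erase_subset _ _)

theorem neighborFinset_inter_swap_ne_singleton
    (hnbr : G.neighborFinset u = {v}) (hvS : v ∉ S) (hS : IsLocatingDominating G S) {w : V}
    (hw : w ∉ (insert v S).erase u) (hwu : w ≠ u) :
    G.neighborFinset w ∩ (insert v S).erase u ≠ {v} := by
  obtain ⟨hwS, hwv⟩ := notMem_and_ne_of_notMem_erase_insert hw hwu
  intro h
  have htrace := erase_neighborFinset_inter_swap hnbr hvS hwv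
  rw [h, erase_singleton] at htrace
  exact (hS.1 w hwS).ne_empty htrace.symm

theorem swap_locating (hnbr : G.neighborFinset u = {v}) (hvS : v ∉ S)
    (hS : IsLocatingDominating G S) :
    ∀ w₁ ∉ (insert v S).erase u, ∀ w₂ ∉ (insert v S).erase u, w₁ ≠ w₂ →
      G.neighborFinset w₁ ∩ (insert v S).erase u ≠
        G.neighborFinset w₂ ∩ (insert v S).erase u := by
  intro w₁ hw₁ w₂ hw₂ hne heq
  have hNu := neighborFinset_inter_swap_of_pendant (S := S) hnbr
  by_cases h₁ : w₁ = u
  · subst h₁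
    exact hS.neighborFinset_inter_swap_ne_singleton hnbr hvS hw₂ hne.symm (heq ▸ hNu)
  by_cases h₂ : w₂ = u
  · subst h₂
    exact hS.neighborFinset_inter_swap_ne_singleton hnbr hvS hw₁ hne (heq ▸ hNu)
  obtain ⟨hw₁S, hw₁v⟩ := notMem_and_ne_of_notMem_erase_insert hw₁ h₁
  obtain ⟨hw₂S, hw₂v⟩ := notMem_and_ne_of_notMem_erase_insert hw₂ h₂
  apply hS.2 w₁ hw₁S w₂ hw₂S hne
  rw [← erase_neighborFinset_inter_swap hnbr hvS hw₁v,
    ← erase_neighborFinset_inter_swap hnbr hvS hw₂v, heq]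

end IsLocatingDominating

theorem swap_pendant_locatingDominating_general {V : Type*} [Fintype V] [DecidableEq V]
    (G : SimpleGraph V) [DecidableRel G.Adj] (S : Finset V) (u v : V)
    (hnbr : G.neighborFinset u = {v})
    (huS : u ∈ S) (hvS : v ∉ S)
    (hS : IsLocatingDominating G S) :
    IsLocatingDominating G ((insert v S).erase u) ∧
      ((insert v S).erase u).card = S.card := by
  refine ⟨⟨hS.swap_dominating hnbr hvS, hS.swap_locating hnbr hvS⟩, ?_⟩
  rw [card_erase_of_mem (mem_insert_of_mem huS), card_insert_of_notMem hvS,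
    Nat.add_sub_cancel]

/-- If `S` is a locating-dominating set, `u` is a pendant vertex (degree 1) whose unique
neighbor is `v`, with `u ∈ S` and `v ∉ S`, then `(S ∪ {v}) \ {u}` is also a
locating-dominating set of the same cardinality. -/
theorem swap_pendant_locatingDominating {V : Type*} [Fintype V] [DecidableEq V]
    (G : SimpleGraph V) [DecidableRel G.Adj] (S : Finset V) (u v : V)
    (hdeg : G.degree u = 1) (hnbr : G.neighborFinset u = {v})
    (huS : u ∈ S) (hvS : v ∉ S)
    (hS : IsLocatingDominating G S) :
    IsLocatingDominating G ((insert v S).erase u) ∧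
      ((insert v S).erase u).card = S.card :=
  swap_pendant_locatingDominating_general G S u v hnbr huS hvS hS
end

section
/- Every instance of Test Cover with |U| = n items in which some test cover exists admits a test cover of size at most n - 1. (Bondy's theorem: if a family of subsets of an n-element set U separates all pairs of elements of U, then some subfamily of size at most n - 1 still separates all pairs.) -/
/-!
Group the points of `U` by their signature, the sets of a subfamily `G` containing them;
`G` separates `U` iff all signatures are distinct, i.e. iff there are `|U|` of them.
Adding to a non-separating `G` a set of `F` that splits two points with equal signatures
raises the number of signatures by at least one. Hence a subfamily `G ⊆ F` with
`|G| ≤ #signatures(G) - 1` (such as `∅`) maximizing the number of signatures separates `U`,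
and has at most `|U| - 1` sets.
-/

/-- A family `F` of subsets of `U` separates `U` if for every pair of distinct elements
there is a set of `F` containing exactly one of them. -/
def Separates {U : Type*} [DecidableEq U] (F : Finset (Finset U)) : Prop :=
  ∀ x y : U, x ≠ y → ∃ T ∈ F, (x ∈ T ∧ y ∉ T) ∨ (y ∈ T ∧ x ∉ T)

open Finset

section Signature

variable {U : Type*} [DecidableEq U]

def signature (F : Finset (Finset U)) (x : U) : Finset (Finset U) := F.filter (x ∈ ·)

lemma signature_inter_of_subset {F G : Finset (Finset U)} (h : F ⊆ G) (x : U) :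
    signature G x ∩ F = signature F x := by
  ext T
  simp only [signature, mem_inter, mem_filter]
  exact ⟨fun ⟨⟨_, hx⟩, hT⟩ => ⟨hT, hx⟩, fun ⟨hT, hx⟩ => ⟨⟨h hT, hx⟩, hT⟩⟩

lemma separates_of_injective_signature {F : Finset (Finset U)}
    (h : Function.Injective (signature F)) : Separates F := by
  intro x y hxy
  by_contra! hsame
  refine hxy (h (Finset.ext fun T => ?_))
  simp only [signature, mem_filter]
  exact ⟨fun ⟨hT, hx⟩ => ⟨hT, (hsame T hT).1 hx⟩, fun ⟨hT, hy⟩ => ⟨hT, (hsame T hT).2 hy⟩⟩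

variable [Fintype U]

def numSignatures (F : Finset (Finset U)) : ℕ := #(univ.image (signature F))

lemma numSignatures_le_card (F : Finset (Finset U)) : numSignatures F ≤ Fintype.card U :=
  card_image_le.trans_eq card_univ

lemma numSignatures_pos_of_not_separates {F : Finset (Finset U)} (h : ¬Separates F) :
    0 < numSignatures F := by
  obtain ⟨x, -⟩ : ∃ x y : U, x ≠ y := by
    by_contra! hsub
    exact h fun x y hxy => absurd (hsub x y) hxy
  exact card_pos.2 ⟨_, mem_image_of_mem _ (mem_univ x)⟩

/-- Restriction to `F` maps the signatures over `insert T F` onto those over `F`, and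
identifies the two distinct signatures of `x` and `y`. -/
lemma numSignatures_lt_insert {F : Finset (Finset U)} {T : Finset U} {x y : U}
    (hxy : signature F x = signature F y) (hx : x ∈ T) (hy : y ∉ T) :
    numSignatures F < numSignatures (insert T F) := by
  set G := insert T F
  have hFG : F ⊆ G := subset_insert T F
  have hrestrict : univ.image (signature F) = (univ.image (signature G)).image (· ∩ F) := by
    rw [image_image]
    exact image_congr fun z _ => (signature_inter_of_subset hFG z).symm
  have hsplit : signature G x ≠ signature G y := fun h => by
    have hT : T ∈ signature G x := mem_filter.2 ⟨mem_insert_self T F, hx⟩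
    rw [h] at hT
    exact hy (mem_filter.1 hT).2
  have hnotInj : ¬Set.InjOn (· ∩ F) (univ.image (signature G) : Set (Finset (Finset U))) :=
    fun hinj => hsplit <| hinj (mem_image_of_mem _ (mem_univ x)) (mem_image_of_mem _ (mem_univ y))
      (by simp only [signature_inter_of_subset hFG, hxy])
  unfold numSignatures
  rw [hrestrict]
  exact lt_of_le_of_ne card_image_le (mt card_image_iff.1 hnotInj)

lemma exists_separating_subset_card_le_numSignatures {F : Finset (Finset U)}
    (hF : Separates F) : ∃ G ⊆ F, Separates G ∧ #G ≤ numSignatures G - 1 := by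
  let good := F.powerset.filter fun G => #G ≤ numSignatures G - 1
  have hempty : ∅ ∈ good := mem_filter.2 ⟨empty_mem_powerset F, by simp⟩
  obtain ⟨G, hG, hmax⟩ := good.exists_max_image numSignatures ⟨∅, hempty⟩
  obtain ⟨hGF, hGcard⟩ := mem_filter.1 hG
  rw [mem_powerset] at hGF
  refine ⟨G, hGF, ?_, hGcard⟩
  by_contra hsep
  obtain ⟨x, y, hsig, hxy⟩ :=
    Function.not_injective_iff.1 (mt separates_of_injective_signature hsep)
  obtain ⟨T, hTF, hT⟩ := hF x y hxy
  have hlt : numSignatures G < numSignatures (insert T G) := by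
    rcases hT with ⟨hx, hy⟩ | ⟨hy, hx⟩
    · exact numSignatures_lt_insert hsig hx hy
    · exact numSignatures_lt_insert hsig.symm hy hx
  have hpos := numSignatures_pos_of_not_separates hsep
  have hinsert : insert T G ∈ good := by
    refine mem_filter.2 ⟨mem_powerset.2 (insert_subset hTF hGF), ?_⟩
    have := card_insert_le T G
    omega
  exact absurd (hmax _ hinsert) (not_le.2 hlt)

end Signature

/-- Bondy's theorem: if a family of subsets of an `n`-element set separates all pairs,
then some subfamily of size at most `n - 1` still separates all pairs. -/
theorem bondy_test_cover {U : Type*} [Fintype U] [DecidableEq U]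
    (F : Finset (Finset U)) (hF : Separates F) :
    ∃ F' ⊆ F, F'.card ≤ Fintype.card U - 1 ∧ Separates F' := by
  obtain ⟨G, hGF, hG, hcard⟩ := exists_separating_subset_card_le_numSignatures hF
  exact ⟨G, hGF, hcard.trans (Nat.sub_le_sub_right (numSignatures_le_card G) 1), hG⟩
end

section
/- Let S be a locating-dominating set of a graph G in which a variable gadget appears: two claws with centers α⁰, β⁰ and leaves α¹,α²,α³ and β¹,β²,β³ respectively, plus vertices x¹, ¬x¹, x², ¬x² with edges making N(α¹) ⊇ {α⁰, x¹, ¬x¹}, N(α²) ⊇ {α⁰, x², ¬x²}, N(β¹) ⊇ {β⁰, ¬x¹, x²}, N(β²) ⊇ {β⁰, ¬x², x¹}, where α³ and β³ are adjacent only to α⁰ and β⁰ respectively within the gadget. If S contains α⁰ and β⁰ and exactly two further vertices among {x¹, ¬x¹, x², ¬x²} from the gadget, then S ∩ {x¹, ¬x¹, x², ¬x²} equals either {x¹, x²} or {¬x¹, ¬x²}. -/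
namespace IsLocatingDominating

variable {V : Type*} [Fintype V] [DecidableEq V] {G : SimpleGraph V} [DecidableRel G.Adj]
  {S : Finset V} {u w : V}

theorem inter_nonempty_of_neighborFinset_eq_union (hS : IsLocatingDominating G S)
    (hu : u ∉ S) (hw : w ∉ S) (huw : u ≠ w) {P : Finset V}
    (hP : G.neighborFinset u = G.neighborFinset w ∪ P) : (P ∩ S).Nonempty := by
  rw [Finset.nonempty_iff_ne_empty]
  intro hPS
  apply hS.2 u hu w hw huw
  rw [hP, Finset.union_inter_distrib_right, hPS, Finset.union_empty]

theorem mem_or_mem_of_neighborFinset_eq_insert_pair (hS : IsLocatingDominating G S)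
    (hu : u ∉ S) (hw : w ∉ S) (huw : u ≠ w) {c p q : V}
    (hNu : G.neighborFinset u = {c, p, q}) (hNw : G.neighborFinset w = {c}) :
    p ∈ S ∨ q ∈ S := by
  obtain ⟨v, hv⟩ := hS.inter_nonempty_of_neighborFinset_eq_union hu hw huw (P := {p, q})
    (by rw [hNu, hNw, ← Finset.insert_eq])
  simp only [Finset.mem_inter, Finset.mem_insert, Finset.mem_singleton] at hv
  obtain ⟨rfl | rfl, hvS⟩ := hv
  exacts [Or.inl hvS, Or.inr hvS]

end IsLocatingDominating

namespace Finset

variable {α : Type*} [DecidableEq α]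

theorem eq_pair_of_mem_of_card_eq_two {T : Finset α} {a b : α} (hT : T.card = 2) (hab : a ≠ b)
    (ha : a ∈ T) (hb : b ∈ T) : T = {a, b} :=
  (eq_of_subset_of_card_le (insert_subset ha (singleton_subset_iff.2 hb))
    (by rw [hT, card_pair hab])).symm

theorem inter_eq_of_covers_square {S : Finset α} {p q r s : α} (hpr : p ≠ r) (hqs : q ≠ s)
    (hcard : (S ∩ {p, q, r, s}).card = 2)
    (hpq : p ∈ S ∨ q ∈ S) (hqr : q ∈ S ∨ r ∈ S) (hrs : r ∈ S ∨ s ∈ S) (hsp : s ∈ S ∨ p ∈ S) :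
    S ∩ {p, q, r, s} = {p, r} ∨ S ∩ {p, q, r, s} = {q, s} := by
  have mem : ∀ v ∈ ({p, q, r, s} : Finset α), v ∈ S → v ∈ S ∩ {p, q, r, s} :=
    fun v hv hvS => mem_inter.2 ⟨hvS, hv⟩
  by_cases hpr_mem : p ∈ S ∧ r ∈ S
  · exact Or.inl <| eq_pair_of_mem_of_card_eq_two hcard hpr
      (mem p (by simp) hpr_mem.1) (mem r (by simp) hpr_mem.2)
  · have hqs_mem : q ∈ S ∧ s ∈ S := by tauto
    exact Or.inr <| eq_pair_of_mem_of_card_eq_two hcard hqs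
      (mem q (by simp) hqs_mem.1) (mem s (by simp) hqs_mem.2)

end Finset

theorem variable_gadget_choice_general {V : Type*} [Fintype V] [DecidableEq V]
    (G : SimpleGraph V) [DecidableRel G.Adj] (S : Finset V)
    (a0 a1 a2 a3 b0 b1 b2 b3 x1 nx1 x2 nx2 : V)
    (hnodup : ([a0, a1, a2, a3, b0, b1, b2, b3, x1, nx1, x2, nx2] : List V).Nodup)
    (ha1 : G.neighborFinset a1 = {a0, x1, nx1})
    (ha2 : G.neighborFinset a2 = {a0, x2, nx2})
    (ha3 : G.neighborFinset a3 = {a0})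
    (hb1 : G.neighborFinset b1 = {b0, nx1, x2})
    (hb2 : G.neighborFinset b2 = {b0, nx2, x1})
    (hb3 : G.neighborFinset b3 = {b0})
    (hS : IsLocatingDominating G S)
    (hleaves : a1 ∉ S ∧ a2 ∉ S ∧ a3 ∉ S ∧ b1 ∉ S ∧ b2 ∉ S ∧ b3 ∉ S)
    (hcard : (S ∩ ({x1, nx1, x2, nx2} : Finset V)).card = 2) :
    S ∩ ({x1, nx1, x2, nx2} : Finset V) = {x1, x2} ∨
      S ∩ ({x1, nx1, x2, nx2} : Finset V) = {nx1, nx2} := by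
  obtain ⟨ha1S, ha2S, ha3S, hb1S, hb2S, hb3S⟩ := hleaves
  have ha13 : a1 ≠ a3 := by rintro rfl; simp at hnodup
  have ha23 : a2 ≠ a3 := by rintro rfl; simp at hnodup
  have hb13 : b1 ≠ b3 := by rintro rfl; simp at hnodup
  have hb23 : b2 ≠ b3 := by rintro rfl; simp at hnodup
  have hx : x1 ≠ x2 := by rintro rfl; simp at hnodup
  have hnx : nx1 ≠ nx2 := by rintro rfl; simp at hnodup
  exact Finset.inter_eq_of_covers_square hx hnx hcard
    (hS.mem_or_mem_of_neighborFinset_eq_insert_pair ha1S ha3S ha13 ha1 ha3)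
    (hS.mem_or_mem_of_neighborFinset_eq_insert_pair hb1S hb3S hb13 hb1 hb3)
    (hS.mem_or_mem_of_neighborFinset_eq_insert_pair ha2S ha3S ha23 ha2 ha3)
    (hS.mem_or_mem_of_neighborFinset_eq_insert_pair hb2S hb3S hb23 hb2 hb3)

/-- Variable gadget: two claws with centers `α⁰, β⁰` and leaves `α¹,α²,α³`, `β¹,β²,β³`,
plus vertices `x¹, ¬x¹, x², ¬x²` with `N(α¹) = {α⁰, x¹, ¬x¹}`, `N(α²) = {α⁰, x², ¬x²}`,
`N(β¹) = {β⁰, ¬x¹, x²}`, `N(β²) = {β⁰, ¬x², x¹}`, `N(α³) = {α⁰}`, `N(β³) = {β⁰}`.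
If a locating-dominating set `S` contains `α⁰` and `β⁰`, none of the leaves, and
exactly two vertices among `{x¹, ¬x¹, x², ¬x²}`, then these two vertices are either
`{x¹, x²}` or `{¬x¹, ¬x²}`. -/
theorem variable_gadget_choice {V : Type*} [Fintype V] [DecidableEq V]
    (G : SimpleGraph V) [DecidableRel G.Adj] (S : Finset V)
    (a0 a1 a2 a3 b0 b1 b2 b3 x1 nx1 x2 nx2 : V)
    (hnodup : ([a0, a1, a2, a3, b0, b1, b2, b3, x1, nx1, x2, nx2] : List V).Nodup)
    (ha1 : G.neighborFinset a1 = {a0, x1, nx1})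
    (ha2 : G.neighborFinset a2 = {a0, x2, nx2})
    (ha3 : G.neighborFinset a3 = {a0})
    (hb1 : G.neighborFinset b1 = {b0, nx1, x2})
    (hb2 : G.neighborFinset b2 = {b0, nx2, x1})
    (hb3 : G.neighborFinset b3 = {b0})
    (hS : IsLocatingDominating G S)
    (ha0S : a0 ∈ S) (hb0S : b0 ∈ S)
    (hleaves : a1 ∉ S ∧ a2 ∉ S ∧ a3 ∉ S ∧ b1 ∉ S ∧ b2 ∉ S ∧ b3 ∉ S)
    (hcard : (S ∩ ({x1, nx1, x2, nx2} : Finset V)).card = 2) :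
    S ∩ ({x1, nx1, x2, nx2} : Finset V) = {x1, x2} ∨
      S ∩ ({x1, nx1, x2, nx2} : Finset V) = {nx1, nx2} :=
  variable_gadget_choice_general G S a0 a1 a2 a3 b0 b1 b2 b3 x1 nx1 x2 nx2 hnodup ha1 ha2 ha3 hb1
    hb2 hb3 hS hleaves hcard
end
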